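/- arXiv:1507.00871 — 3 statements merged into one kernel-verified Lean document; each statement's English description precedes it below -/
import Mathlib

section
/- Let n be a positive integer and let f : [0, n] → ℝ be continuous with f(0) = f(n). Then there exists x ∈ [0, n-1] with f(x+1) = f(x). -/
/-! The increments `f (k + 1) - f k`, `k = 0, …, n - 1`, telescope to `f n - f 0 = 0`, so one of
them is `≤ 0` and another `≥ 0`; the intermediate value theorem for `x ↦ f (x + 1) - f x` on
`[0, n - 1]` then yields a zero. -/

open Finset Set

theorem IsPreconnected.exists_eq_zero_of_sum_eq_zero {X α ι : Type*} [TopologicalSpace X]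
    [AddCommGroup α] [LinearOrder α] [IsOrderedAddMonoid α] [TopologicalSpace α]
    [OrderClosedTopology α] {s : Set X} (hs : IsPreconnected s) {g : X → α}
    (hg : ContinuousOn g s) {t : Finset ι} (ht : t.Nonempty) {p : ι → X}
    (hp : ∀ i ∈ t, p i ∈ s) (hsum : ∑ i ∈ t, g (p i) = 0) : ∃ x ∈ s, g x = 0 := by
  obtain ⟨i, hi, hgi⟩ : ∃ i ∈ t, g (p i) ≤ 0 :=
    exists_le_of_sum_le ht (by simp [hsum])
  obtain ⟨j, hj, hgj⟩ : ∃ j ∈ t, (0 : α) ≤ g (p j) :=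
    exists_le_of_sum_le ht (by simp [hsum])
  exact hs.intermediate_value (hp i hi) (hp j hj) hg ⟨hgi, hgj⟩

theorem ContinuousOn.sub_comp_add_right {f : ℝ → ℝ} {a b h : ℝ} (hf : ContinuousOn f (Icc a b))
    (hh : 0 ≤ h) : ContinuousOn (fun x => f (x + h) - f x) (Icc a (b - h)) := by
  refine (hf.comp (continuous_add_const h).continuousOn ?_).sub (hf.mono ?_)
  · intro x hx
    exact ⟨by linarith [hx.1], by linarith [hx.2]⟩
  · exact Icc_subset_Icc le_rfl (by linarith)

theorem sum_range_sub_natCast {M : Type*} [AddCommGroup M] (f : ℝ → M) (n : ℕ) :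
    ∑ k ∈ range n, (f ((k : ℝ) + 1) - f k) = f n - f 0 := by
  simpa using Finset.sum_range_sub (fun k : ℕ => f k) n

theorem universal_chord_unit (n : ℕ) (hn : 0 < n) (f : ℝ → ℝ)
    (hf : ContinuousOn f (Set.Icc 0 (n : ℝ)))
    (hend : f 0 = f (n : ℝ)) :
    ∃ x ∈ Set.Icc (0 : ℝ) ((n : ℝ) - 1), f (x + 1) = f x := by
  have hmem : ∀ k ∈ range n, (k : ℝ) ∈ Icc (0 : ℝ) (n - 1) := fun k hk =>
    ⟨k.cast_nonneg, by
      have : (k : ℝ) + 1 ≤ n := by exact_mod_cast mem_range.mp hk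
      linarith⟩
  obtain ⟨x, hx, hx0⟩ := isPreconnected_Icc.exists_eq_zero_of_sum_eq_zero
    (hf.sub_comp_add_right zero_le_one) (nonempty_range_iff.mpr hn.ne') hmem
    (by rw [sum_range_sub_natCast, hend, sub_self])
  exact ⟨x, hx, sub_eq_zero.mp hx0⟩
end

section
/- Let S* ⊆ (0, ∞) be open and additive, S = [0, ∞) \ S*, L = sup S. With a(x) = sup{ y ∈ ∂S : y ≤ x }, b(x) = inf{ y ∈ ∂S : y ≥ x }, α(x) = x − a(x), β(x) = b(x) − x: if s* ∈ S* and both x and s* + x lie in the interior of S, then α(s* + x) < α(x) and β(s* + x) < β(x). -/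
/-!
Let `S = [0, ∞) \ S*`. A boundary point `y` of `S` is either `0` or a limit of points of `S*`,
and since `S*` is open and closed under addition, `s* + y ∈ S*` for every `s* ∈ S*`.
Since `0 ∈ ∂S` and `S*` is unbounded (if `p ∈ S*` is close to `sup S*`, then `p + s* > sup S*`),
`a(x)` and `b(x)` are boundary points, so `s* + a(x)` and `s* + b(x)` lie outside `S`, while
`s* + x` lies in `S`. Walking from `s* + a(x)` up to `s* + x` (resp. from `s* + x` up to
`s* + b(x)`) we must cross `∂S`, which gives `s* + a(x) < a(s* + x)` and `b(s* + x) < s* + b(x)`.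
-/

open Set

theorem IsPreconnected.inter_frontier_nonempty {X : Type*} [TopologicalSpace X] {P S : Set X}
    (hP : IsPreconnected P) (hin : (P ∩ S).Nonempty) (hout : (P \ S).Nonempty) :
    (P ∩ frontier S).Nonempty := by
  obtain ⟨x, hxP, hxS⟩ := hin
  obtain ⟨y, hyP, hyS⟩ := hout
  rw [frontier_eq_closure_inter_closure]
  refine isPreconnected_closed_iff.1 hP _ _ isClosed_closure isClosed_closure (fun z _ => ?_)
    ⟨x, hxP, subset_closure hxS⟩ ⟨y, hyP, subset_closure hyS⟩
  by_cases hz : z ∈ S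
  exacts [Or.inl (subset_closure hz), Or.inr (subset_closure hz)]

section Order

variable {α : Type*} [ConditionallyCompleteLinearOrder α] [TopologicalSpace α] [OrderTopology α]
  {S : Set α} {u v w : α}

theorem IsClosed.exists_frontier_mem_Ioc [DenselyOrdered α] (hS : IsClosed S) (hu : u ∉ S)
    (hv : v ∈ S) (huv : u ≤ v) : ∃ w ∈ frontier S, w ∈ Ioc u v := by
  obtain ⟨w, ⟨huw, hwv⟩, hw⟩ :=
    isPreconnected_Icc.inter_frontier_nonempty ⟨v, ⟨huv, le_rfl⟩, hv⟩ ⟨u, ⟨le_rfl, huv⟩, hu⟩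
  refine ⟨w, hw, huw.lt_of_ne ?_, hwv⟩
  rintro rfl
  exact hu (hS.frontier_subset hw)

theorem IsClosed.exists_frontier_mem_Ico [DenselyOrdered α] (hS : IsClosed S) (hu : u ∈ S)
    (hv : v ∉ S) (huv : u ≤ v) : ∃ w ∈ frontier S, w ∈ Ico u v := by
  obtain ⟨w, ⟨huw, hwv⟩, hw⟩ :=
    isPreconnected_Icc.inter_frontier_nonempty ⟨u, ⟨le_rfl, huv⟩, hu⟩ ⟨v, ⟨huv, le_rfl⟩, hv⟩
  refine ⟨w, hw, huw, hwv.lt_of_ne ?_⟩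
  rintro rfl
  exact hv (hS.frontier_subset hw)

theorem csSup_frontier_Iic_mem (hw : w ∈ frontier S) (hwv : w ≤ v) :
    sSup {y | y ∈ frontier S ∧ y ≤ v} ∈ frontier S ∧ sSup {y | y ∈ frontier S ∧ y ≤ v} ≤ v :=
  (isClosed_frontier.inter isClosed_Iic).csSup_mem ⟨w, hw, hwv⟩ ⟨v, fun _ hy => hy.2⟩

theorem csInf_frontier_Ici_mem (hw : w ∈ frontier S) (huw : u ≤ w) :
    sInf {y | y ∈ frontier S ∧ u ≤ y} ∈ frontier S ∧ u ≤ sInf {y | y ∈ frontier S ∧ u ≤ y} :=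
  (isClosed_frontier.inter isClosed_Ici).csInf_mem ⟨w, hw, huw⟩ ⟨u, fun _ hy => hy.2⟩

theorem IsClosed.lt_csSup_frontier_Iic [DenselyOrdered α] (hS : IsClosed S) (hu : u ∉ S)
    (hv : v ∈ S) (huv : u ≤ v) : u < sSup {y | y ∈ frontier S ∧ y ≤ v} := by
  obtain ⟨w, hw, huw, hwv⟩ := hS.exists_frontier_mem_Ioc hu hv huv
  exact huw.trans_le (le_csSup ⟨v, fun _ hy => hy.2⟩ ⟨hw, hwv⟩)

theorem IsClosed.csInf_frontier_Ici_lt [DenselyOrdered α] (hS : IsClosed S) (hu : u ∈ S)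
    (hv : v ∉ S) (huv : u ≤ v) : sInf {y | y ∈ frontier S ∧ u ≤ y} < v := by
  obtain ⟨w, hw, huw, hwv⟩ := hS.exists_frontier_mem_Ico hu hv huv
  exact lt_of_le_of_lt (csInf_le ⟨u, fun _ hy => hy.2⟩ ⟨hw, huw⟩) hwv

end Order

theorem IsOpen.add_mem_of_mem_closure {G : Type*} [TopologicalSpace G] [AddGroup G]
    [IsTopologicalAddGroup G] {U : Set G} {s y : G} (hU : IsOpen U)
    (hadd : ∀ p ∈ U, ∀ q ∈ U, p + q ∈ U) (hs : s ∈ U) (hy : y ∈ closure U) : s + y ∈ U := by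
  have hV : IsOpen ((fun q => s + y - q) ⁻¹' U) := hU.preimage (continuous_const.sub continuous_id)
  obtain ⟨q, hq, hqU⟩ := mem_closure_iff.1 hy _ hV (by simpa using hs)
  simpa using hadd _ hq q hqU

section IciSdiff

variable {α : Type*} [LinearOrder α] [TopologicalSpace α] [OrderTopology α] [DenselyOrdered α]
  [NoMinOrder α] {U : Set α} {a y : α}

theorem mem_frontier_Ici_sdiff (ha : a ∉ U) : a ∈ frontier (Ici a \ U) := by
  refine ⟨subset_closure ⟨self_mem_Ici, ha⟩, fun h => ?_⟩
  have : a ∈ Ioi a := interior_Ici (a := a) ▸ interior_mono sdiff_subset h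
  exact lt_irrefl a this

theorem eq_or_mem_closure_of_mem_frontier_Ici_sdiff (hy : y ∈ frontier (Ici a \ U)) :
    y = a ∨ y ∈ closure U := by
  rcases frontier_inter_subset (Ici a) Uᶜ hy with ⟨hya, -⟩ | ⟨-, hyU⟩
  · exact Or.inl (frontier_Ici.subset hya)
  · rw [frontier_compl] at hyU
    exact Or.inr (frontier_subset_closure hyU)

end IciSdiff

section AdditiveSet

variable {U : Set ℝ} {s y : ℝ}

theorem add_mem_of_mem_frontier_Ici_sdiff (hU : IsOpen U) (hadd : ∀ p ∈ U, ∀ q ∈ U, p + q ∈ U)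
    (hs : s ∈ U) (hy : y ∈ frontier (Ici 0 \ U)) : s + y ∈ U := by
  rcases eq_or_mem_closure_of_mem_frontier_Ici_sdiff hy with rfl | hyU
  · simpa using hs
  · exact hU.add_mem_of_mem_closure hadd hs hyU

theorem not_bddAbove_of_add_mem (hadd : ∀ p ∈ U, ∀ q ∈ U, p + q ∈ U) (hs : s ∈ U) (hs0 : 0 < s) :
    ¬BddAbove U := by
  intro hbdd
  obtain ⟨p, hp, hlt⟩ := exists_lt_of_lt_csSup ⟨s, hs⟩ (sub_lt_self (sSup U) hs0)
  exact (le_csSup hbdd (hadd p hp s hs)).not_gt (by linarith)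

end AdditiveSet

theorem alpha_beta_decrease (Sstar : Set ℝ) (hsub : Sstar ⊆ Set.Ioi 0)
    (hopen : IsOpen Sstar) (hadd : ∀ p ∈ Sstar, ∀ q ∈ Sstar, p + q ∈ Sstar)
    (S : Set ℝ) (hS : S = Set.Ici (0 : ℝ) \ Sstar)
    (a b : ℝ → ℝ)
    (ha : ∀ x, a x = sSup {y | y ∈ frontier S ∧ y ≤ x})
    (hb : ∀ x, b x = sInf {y | y ∈ frontier S ∧ x ≤ y})
    (sstar : ℝ) (hsstar : sstar ∈ Sstar) (x : ℝ)
    (hx : x ∈ interior S) (hx' : sstar + x ∈ interior S) :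
    (sstar + x) - a (sstar + x) < x - a x ∧ b (sstar + x) - (sstar + x) < b x - x := by
  subst hS
  simp only [ha, hb]
  have hScl : IsClosed (Ici 0 \ Sstar) := isClosed_Ici.sdiff hopen
  have hxS : x ∈ Ici 0 \ Sstar := interior_subset hx
  have hx'S : sstar + x ∈ Ici 0 \ Sstar := interior_subset hx'
  have hshift : ∀ y ∈ frontier (Ici 0 \ Sstar), sstar + y ∉ Ici 0 \ Sstar :=
    fun y hy h => h.2 (add_mem_of_mem_frontier_Ici_sdiff hopen hadd hsstar hy)
  have h0 : (0 : ℝ) ∈ frontier (Ici 0 \ Sstar) :=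
    mem_frontier_Ici_sdiff fun h => lt_irrefl (0 : ℝ) (hsub h)
  obtain ⟨hax, haxx⟩ := csSup_frontier_Iic_mem h0 hxS.1
  obtain ⟨N, hN, hxN⟩ := not_bddAbove_iff.1 (not_bddAbove_of_add_mem hadd hsstar (hsub hsstar)) x
  obtain ⟨w, hw, hxw, -⟩ := hScl.exists_frontier_mem_Ico hxS (fun h => h.2 hN) hxN.le
  obtain ⟨hbx, hxbx⟩ := csInf_frontier_Ici_mem hw hxw
  constructor
  · have := hScl.lt_csSup_frontier_Iic (hshift _ hax) hx'S (by linarith)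
    linarith
  · have := hScl.csInf_frontier_Ici_lt hx'S (hshift _ hbx) (by linarith)
    linarith
end

section
/- Let S ⊆ [0, ∞) be closed with complement S* = [0, ∞) \ S open and additive, S bounded with L = sup S, and define h_S : [0, L] → ℝ by h_S(x) = 0 if x ∈ ∂S, h_S(x) = dist(x, ∂S) if x ∈ interior of S, and h_S(x) = −dist(x, ∂S) if x ∈ S*. Then for every s* ∈ S* and every x with 0 ≤ x and x + s* ≤ L, h_S(x + s*) ≠ h_S(x). -/
open Metric Set Filter Topology
open scoped Pointwise

/-!
Write `S* = [0, ∞) \ S`. Being open and closed under addition, `S*` absorbs translates: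
`∂S + S* ⊆ S*`, and `a - t ∈ S` whenever `a ∈ S`, `t ∈ S*`, `t ≤ a`. So translating by `s ∈ S*`
moves a nearest boundary point of `x ∈ int S` into the open set `S*`, which makes `x + s` strictly
closer to `∂S`; dually, a nearest point `a ∈ S` of `x + s ∈ S*` has `a - s ∈ int S`, which makes
`x` strictly closer to `S`. With the signs of `h_S` on `∂S`, `int S` and `S*` this excludes
`h_S (x + s) = h_S x`.
-/

theorem IsPreconnected.inter_frontier_nonempty_s16 {X : Type*} [TopologicalSpace X] {s t : Set X}
    (hs : IsPreconnected s) (hst : (s ∩ t).Nonempty) (hsc : (s \ t).Nonempty) :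
    (s ∩ frontier t).Nonempty := by
  by_contra! h
  have hcover : s ⊆ interior t ∪ (closure t)ᶜ := fun x hx => by
    by_contra! hx'
    exact h.subset ⟨hx, not_not.mp (not_or.mp hx').2, (not_or.mp hx').1⟩
  have hin : (s ∩ interior t).Nonempty := hst.mono fun x hx =>
    ⟨hx.1, (hcover hx.1).resolve_right (not_not.mpr (subset_closure hx.2))⟩
  have hout : (s ∩ (closure t)ᶜ).Nonempty := hsc.mono fun x hx =>
    ⟨hx.1, (hcover hx.1).resolve_left fun hi => hx.2 (interior_subset hi)⟩
  obtain ⟨x, -, hx, hx'⟩ :=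
    hs _ _ isOpen_interior isClosed_closure.isOpen_compl hcover hin hout
  exact hx' (interior_subset_closure hx)

theorem infDist_lt_dist_of_mem_nhds {E : Type*} [NormedAddCommGroup E] [NormedSpace ℝ E]
    {B : Set E} {v c : E} (hc : c ≠ v) (hB : B ∈ 𝓝 c) : infDist v B < dist v c := by
  have hpath : Tendsto (fun θ : ℝ => c + θ • (v - c)) (𝓝[>] 0) (𝓝 c) := by
    have : Continuous (fun θ : ℝ => c + θ • (v - c)) := by fun_prop
    simpa using (this.tendsto 0).mono_left nhdsWithin_le_nhds
  obtain ⟨θ, hθB, hθ0, hθ1⟩ :=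
    ((hpath.eventually hB).and (Ioo_mem_nhdsGT zero_lt_one)).exists
  calc infDist v B ≤ dist v (c + θ • (v - c)) := infDist_le_dist_of_mem hθB
    _ = (1 - θ) * dist v c := by
      rw [dist_eq_norm, dist_eq_norm,
        show v - (c + θ • (v - c)) = (1 - θ) • (v - c) by module,
        norm_smul, Real.norm_of_nonneg (by linarith)]
    _ < dist v c := by nlinarith [dist_pos.mpr hc.symm]

theorem infDist_frontier_eq_infDist_of_notMem {T : Set ℝ} {u : ℝ} (hu : u ∉ T) :
    infDist u (frontier T) = infDist u T := by
  rcases T.eq_empty_or_nonempty with rfl | hT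
  · simp
  have hbetween : ∀ t ∈ T, ∃ p ∈ frontier T, dist u p ≤ dist u t := fun t ht => by
    obtain ⟨p, hpI, hpF⟩ := isPreconnected_uIcc.inter_frontier_nonempty_s16
      ⟨t, right_mem_uIcc, ht⟩ ⟨u, left_mem_uIcc, hu⟩
    exact ⟨p, hpF, Real.dist_left_le_of_mem_uIcc hpI⟩
  obtain ⟨p, hpF, -⟩ := hbetween hT.some hT.some_mem
  refine le_antisymm ((le_infDist hT).2 fun t ht => ?_) ?_
  · obtain ⟨p, hpF, hp⟩ := hbetween t ht
    exact (infDist_le_dist_of_mem hpF).trans hp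
  · rw [← infDist_closure (s := T)]
    exact infDist_le_infDist_of_subset frontier_subset_closure ⟨p, hpF⟩

theorem add_mem_of_mem_closure_of_mem {G : Type*} [AddGroup G] [TopologicalSpace G]
    [IsTopologicalAddGroup G] {U : Set G} (hU : IsOpen U)
    (hadd : ∀ p ∈ U, ∀ q ∈ U, p + q ∈ U) {b t : G} (hb : b ∈ closure U) (ht : t ∈ U) :
    b + t ∈ U := by
  obtain ⟨p, hp, q, hq, hpq⟩ : b + t ∈ U + U := hU.closure_add U ▸ add_mem_add hb ht
  exact hpq ▸ hadd p hp q hq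

section

variable {S : Set ℝ}

theorem zero_mem_frontier_of_isOpen_Ici_diff (hsub : S ⊆ Ici 0) (hopen : IsOpen (Ici 0 \ S)) :
    (0 : ℝ) ∈ frontier S := by
  have h0 : (0 : ℝ) ∈ S := by
    by_contra h
    have : (0 : ℝ) ∈ interior (Ici 0) :=
      interior_maximal sdiff_subset hopen ⟨self_mem_Ici, h⟩
    simp at this
  refine ⟨subset_closure h0, fun h => ?_⟩
  have : (0 : ℝ) ∈ interior (Ici 0) := interior_mono hsub h
  simp at this

theorem add_mem_Ici_diff_of_mem_frontier (hsub : S ⊆ Ici 0) (hopen : IsOpen (Ici 0 \ S))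
    (hadd : ∀ p ∈ Ici 0 \ S, ∀ q ∈ Ici 0 \ S, p + q ∈ Ici 0 \ S) {b t : ℝ}
    (hb : b ∈ frontier S) (ht : t ∈ Ici 0 \ S) : b + t ∈ Ici 0 \ S := by
  have hb0 : 0 ≤ b := closure_minimal hsub isClosed_Ici hb.1
  have hcompl : Sᶜ ⊆ Iio 0 ∪ (Ici 0 \ S) := fun u hu => (lt_or_ge u 0).imp id (⟨·, hu⟩)
  have hb' : b ∈ closure (Iio 0 ∪ (Ici 0 \ S)) :=
    closure_mono hcompl (frontier_subset_closure (frontier_compl S ▸ hb : b ∈ frontier Sᶜ))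
  rw [closure_union, closure_Iio] at hb'
  rcases hb' with hb' | hb'
  · rwa [le_antisymm hb' hb0, zero_add]
  · exact add_mem_of_mem_closure_of_mem hopen hadd hb' ht

theorem mem_frontier_or_mem_interior_or_mem_Ici_diff (hS : IsClosed S) {u : ℝ} (hu : 0 ≤ u) :
    u ∈ frontier S ∨ u ∈ interior S ∨ u ∈ Ici 0 \ S := by
  by_cases huS : u ∈ S
  · rw [← hS.closure_eq, closure_eq_interior_union_frontier] at huS
    exact huS.symm.imp_right Or.inl
  · exact Or.inr (Or.inr ⟨hu, huS⟩)

theorem mem_of_sub_mem_Ici_diff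
    (hadd : ∀ p ∈ Ici 0 \ S, ∀ q ∈ Ici 0 \ S, p + q ∈ Ici 0 \ S)
    {a w : ℝ} (ha : a ∈ S) (hw : 0 ≤ w) (haw : a - w ∈ Ici 0 \ S) : w ∈ S := by
  by_contra hwS
  have := hadd w ⟨hw, hwS⟩ _ haw
  rw [add_sub_cancel] at this
  exact this.2 ha

theorem infDist_frontier_add_lt_of_mem_interior (hsub : S ⊆ Ici 0) (hopen : IsOpen (Ici 0 \ S))
    (hadd : ∀ p ∈ Ici 0 \ S, ∀ q ∈ Ici 0 \ S, p + q ∈ Ici 0 \ S) {x s : ℝ}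
    (hx : x ∈ interior S) (hs : s ∈ Ici 0 \ S) (hxs : x + s ∈ S) :
    infDist (x + s) (frontier S) < infDist x (frontier S) := by
  obtain ⟨a, haF, hxa⟩ := isClosed_frontier.exists_infDist_eq_dist
    ⟨0, zero_mem_frontier_of_isOpen_Ici_diff hsub hopen⟩ x
  have hax : a + s ≠ x + s := fun h => haF.2 (add_right_cancel h ▸ hx)
  have hcompl : Sᶜ ∈ 𝓝 (a + s) := mem_of_superset
    (hopen.mem_nhds (add_mem_Ici_diff_of_mem_frontier hsub hopen hadd haF hs)) fun _ hu => hu.2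
  calc infDist (x + s) (frontier S) = infDist (x + s) Sᶜ := by
        rw [← frontier_compl]; exact infDist_frontier_eq_infDist_of_notMem (not_not.mpr hxs)
    _ < dist (x + s) (a + s) := infDist_lt_dist_of_mem_nhds hax hcompl
    _ = infDist x (frontier S) := by rw [dist_add_right, hxa]

theorem infDist_frontier_lt_add_of_notMem (hS : IsClosed S) (hsub : S ⊆ Ici 0)
    (hopen : IsOpen (Ici 0 \ S))
    (hadd : ∀ p ∈ Ici 0 \ S, ∀ q ∈ Ici 0 \ S, p + q ∈ Ici 0 \ S) {x s : ℝ}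
    (hx : x ∈ Ici 0 \ S) (hs : s ∈ Ici 0 \ S) (hxs : x + s ∉ S) :
    infDist x (frontier S) < infDist (x + s) (frontier S) := by
  rw [infDist_frontier_eq_infDist_of_notMem hx.2, infDist_frontier_eq_infDist_of_notMem hxs]
  have h0 : (0 : ℝ) ∈ S := hS.frontier_subset (zero_mem_frontier_of_isOpen_Ici_diff hsub hopen)
  have hx0 : infDist x S ≤ x := by
    simpa [abs_of_nonneg (mem_Ici.1 hx.1)] using infDist_le_dist_of_mem (x := x) h0
  by_contra! hle
  obtain ⟨a, haS, hya⟩ := hS.exists_infDist_eq_dist ⟨0, h0⟩ (x + s)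
  have hsa : s < a := by
    have : |x + s - a| ≤ x := by rw [← Real.dist_eq, ← hya]; linarith
    exact lt_of_le_of_ne (by linarith [le_abs_self (x + s - a)]) fun h => hs.2 (h ▸ haS)
  have hnhds : S ∈ 𝓝 (a - s) := by
    have hU : (a - ·) ⁻¹' (Ici 0 \ S) ∈ 𝓝 (a - s) :=
      (continuous_const.sub continuous_id).continuousAt.preimage_mem_nhds
        (by simpa using hopen.mem_nhds hs)
    filter_upwards [eventually_gt_nhds (sub_pos.2 hsa), hU] with w hw hwU
    exact mem_of_sub_mem_Ici_diff hadd haS hw.le hwU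
  have hax : a - s ≠ x := fun h => hxs (by rwa [← h, sub_add_cancel])
  have hdist : dist x (a - s) = dist (x + s) a := by simp only [Real.dist_eq]; ring_nf
  have := infDist_lt_dist_of_mem_nhds hax hnhds
  rw [hdist, ← hya] at this
  linarith

end

theorem hopf_theorem_II_exclusion_general (S Sstar : Set ℝ) (hSclosed : IsClosed S)
    (hSsub : S ⊆ Set.Ici 0) (hSstar : Sstar = Set.Ici (0 : ℝ) \ S)
    (hopen : IsOpen Sstar) (hadd : ∀ p ∈ Sstar, ∀ q ∈ Sstar, p + q ∈ Sstar)
    (L : ℝ)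
    (hS : ℝ → ℝ)
    (hdef_bd : ∀ x ∈ frontier S, hS x = 0)
    (hdef_int : ∀ x ∈ interior S, hS x = Metric.infDist x (frontier S))
    (hdef_star : ∀ x ∈ Sstar, hS x = -Metric.infDist x (frontier S)) :
    ∀ sstar ∈ Sstar, ∀ x : ℝ, 0 ≤ x → x + sstar ≤ L → hS (x + sstar) ≠ hS x := by
  subst hSstar
  intro s hs x hx _ heq
  have hF : (frontier S).Nonempty := ⟨0, zero_mem_frontier_of_isOpen_Ici_diff hSsub hopen⟩
  have hpos : ∀ u ∈ interior S, 0 < hS u := fun u hu => by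
    rw [hdef_int u hu]
    exact (isClosed_frontier.notMem_iff_infDist_pos hF).1 fun h => h.2 hu
  have hneg : ∀ u ∈ Ici 0 \ S, hS u < 0 := fun u hu => by
    rw [hdef_star u hu, neg_lt_zero]
    exact (isClosed_frontier.notMem_iff_infDist_pos hF).1 fun h => hu.2 (hSclosed.frontier_subset h)
  have hregion := fun u => mem_frontier_or_mem_interior_or_mem_Ici_diff hSclosed (u := u)
  rcases hregion x hx with hxF | hxI | hxU
  · exact (hneg _ (add_mem_Ici_diff_of_mem_frontier hSsub hopen hadd hxF hs)).ne
      (heq.trans (hdef_bd x hxF))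
  · rcases hregion (x + s) (add_nonneg hx hs.1) with hyF | hyI | hyU
    · linarith [hpos x hxI, hdef_bd _ hyF]
    · refine (infDist_frontier_add_lt_of_mem_interior hSsub hopen hadd hxI hs
        (interior_subset hyI)).ne ?_
      rw [← hdef_int _ hyI, ← hdef_int _ hxI, heq]
    · linarith [hpos x hxI, hneg _ hyU]
  · rcases hregion (x + s) (add_nonneg hx hs.1) with hyF | hyI | hyU
    · linarith [hneg x hxU, hdef_bd _ hyF]
    · linarith [hneg x hxU, hpos _ hyI]
    · refine (infDist_frontier_lt_add_of_notMem hSclosed hSsub hopen hadd hxU hs hyU.2).ne' ?_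
      linarith [hdef_star _ hyU, hdef_star _ hxU]

theorem hopf_theorem_II_exclusion (S Sstar : Set ℝ) (hSclosed : IsClosed S)
    (hSsub : S ⊆ Set.Ici 0) (hSstar : Sstar = Set.Ici (0 : ℝ) \ S)
    (hopen : IsOpen Sstar) (hadd : ∀ p ∈ Sstar, ∀ q ∈ Sstar, p + q ∈ Sstar)
    (hne : S.Nonempty) (hbdd : BddAbove S) (L : ℝ) (hL : L = sSup S)
    (hS : ℝ → ℝ)
    (hdef_bd : ∀ x ∈ frontier S, hS x = 0)
    (hdef_int : ∀ x ∈ interior S, hS x = Metric.infDist x (frontier S))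
    (hdef_star : ∀ x ∈ Sstar, hS x = -Metric.infDist x (frontier S)) :
    ∀ sstar ∈ Sstar, ∀ x : ℝ, 0 ≤ x → x + sstar ≤ L → hS (x + sstar) ≠ hS x :=
  hopf_theorem_II_exclusion_general S Sstar hSclosed hSsub hSstar hopen hadd L hS hdef_bd hdef_int
    hdef_star
end
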